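/- For a > 1, m, n ∈ ℕ₊, and x, y ≥ 0, the first central moment of the bivariate Szász-Mirakjan type operator satisfies Ŷ_{m,n,a}((t − x); x, y) = −x (m a^{1/m} − log a − m) / (m (a^{1/m} − 1)). -/

import Mathlib

open Real Filter

/-- One-dimensional Szász–Mirakjan type kernel. -/
noncomputable def szKernel (a : ℝ) (m : ℕ) (x : ℝ) (k : ℕ) : ℝ :=
  a ^ (-x / (a ^ ((m : ℝ)⁻¹) - 1)) * (x * Real.log a) ^ k /
    ((a ^ ((m : ℝ)⁻¹) - 1) ^ k * (k.factorial : ℝ))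

/-- Bivariate Szász–Mirakjan type operator. -/
noncomputable def szBiv (a : ℝ) (m n : ℕ) (f : ℝ → ℝ → ℝ) (x y : ℝ) : ℝ :=
  ∑' k₁ : ℕ, ∑' k₂ : ℕ,
    szKernel a m x k₁ * szKernel a n y k₂ * f ((k₁ : ℝ) / m) ((k₂ : ℝ) / n)

/-- Associated GBS (Generalized Boolean Sum) operator. -/
noncomputable def szGBS (a : ℝ) (m n : ℕ) (f : ℝ → ℝ → ℝ) (x y : ℝ) : ℝ :=
  ∑' k₁ : ℕ, ∑' k₂ : ℕ,
    szKernel a m x k₁ * szKernel a n y k₂ *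
      (f x ((k₂ : ℝ) / n) + f ((k₁ : ℝ) / m) y - f ((k₁ : ℝ) / m) ((k₂ : ℝ) / n))

/-!
For `a > 0` the kernel `szKernel a m x` is the Poisson distribution with parameter
`c = x log a / (a^{1/m} - 1)`. Hence the weights in the second variable sum to `1`, and the
first moment is `∑ k (k/m - x) e^{-c} c^k/k! = c/m - x`.
-/

open scoped Nat

lemma hasSum_pow_div_factorial_exp (c : ℝ) : HasSum (fun k : ℕ => c ^ k / k !) (exp c) := by
  rw [exp_eq_exp_ℝ]
  exact NormedSpace.expSeries_div_hasSum_exp c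

lemma hasSum_nat_mul_pow_div_factorial (c : ℝ) :
    HasSum (fun k : ℕ => k * (c ^ k / k !)) (c * exp c) := by
  rw [← hasSum_nat_add_iff' 1, Finset.sum_range_one, Nat.cast_zero, zero_mul, sub_zero]
  refine ((hasSum_pow_div_factorial_exp c).mul_left c).congr_fun fun k => ?_
  rw [Nat.factorial_succ]
  push_cast
  field_simp
  ring

noncomputable def szPoissonParam (a : ℝ) (m : ℕ) (x : ℝ) : ℝ :=
  x * log a / (a ^ ((m : ℝ)⁻¹) - 1)

section Kernel

variable {a : ℝ} (m : ℕ) (x : ℝ)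

lemma szKernel_eq_poisson (ha : 0 < a) (k : ℕ) :
    szKernel a m x k = exp (-szPoissonParam a m x) * (szPoissonParam a m x ^ k / k !) := by
  rw [szKernel, szPoissonParam, rpow_def_of_pos ha, div_pow, mul_pow]
  ring_nf

lemma hasSum_szKernel (ha : 0 < a) : HasSum (szKernel a m x) 1 := by
  set c := szPoissonParam a m x
  have h := (hasSum_pow_div_factorial_exp c).mul_left (exp (-c))
  rw [← exp_add, neg_add_cancel, exp_zero] at h
  exact h.congr_fun (szKernel_eq_poisson m x ha)

lemma hasSum_nat_mul_szKernel (ha : 0 < a) :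
    HasSum (fun k : ℕ => k * szKernel a m x k) (szPoissonParam a m x) := by
  set c := szPoissonParam a m x
  have h := (hasSum_nat_mul_pow_div_factorial c).mul_left (exp (-c))
  rw [mul_left_comm, ← exp_add, neg_add_cancel, exp_zero, mul_one] at h
  refine h.congr_fun fun k => ?_
  rw [szKernel_eq_poisson m x ha]
  ring

lemma hasSum_szKernel_mul_sub (ha : 0 < a) :
    HasSum (fun k : ℕ => szKernel a m x k * (k / m - x)) (szPoissonParam a m x / m - x) := by
  have h := ((hasSum_nat_mul_szKernel m x ha).div_const m).sub
    ((hasSum_szKernel m x ha).mul_right x)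
  rw [one_mul] at h
  exact h.congr_fun fun k => by ring

end Kernel

lemma szBiv_of_fst {a : ℝ} (ha : 0 < a) (m n : ℕ) (g : ℝ → ℝ) (x y : ℝ) :
    szBiv a m n (fun t _ => g t) x y = ∑' k : ℕ, szKernel a m x k * g (k / m) := by
  simp_rw [szBiv, mul_right_comm _ (szKernel a n y _), tsum_mul_left,
    (hasSum_szKernel n y ha).tsum_eq, mul_one]

theorem stmt_3_general (a : ℝ) (ha : 1 < a) (m n : ℕ) (hm : 0 < m)
    (x y : ℝ) :
    szBiv a m n (fun t _ => t - x) x y =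
      -(x * (m * a ^ ((m : ℝ)⁻¹) - Real.log a - m)) /
        (m * (a ^ ((m : ℝ)⁻¹) - 1)) := by
  have ha0 : 0 < a := by positivity
  have hq : a ^ ((m : ℝ)⁻¹) - 1 ≠ 0 := (sub_pos.2 (one_lt_rpow ha (by positivity))).ne'
  have hm' : (m : ℝ) ≠ 0 := by positivity
  rw [szBiv_of_fst ha0, (hasSum_szKernel_mul_sub m x ha0).tsum_eq, szPoissonParam]
  generalize a ^ ((m : ℝ)⁻¹) = q at hq ⊢
  field_simp
  ring

theorem stmt_3 (a : ℝ) (ha : 1 < a) (m n : ℕ) (hm : 0 < m) (hn : 0 < n)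
    (x y : ℝ) (hx : 0 ≤ x) (hy : 0 ≤ y) :
    szBiv a m n (fun t _ => t - x) x y =
      -(x * (m * a ^ ((m : ℝ)⁻¹) - Real.log a - m)) /
        (m * (a ^ ((m : ℝ)⁻¹) - 1)) :=
  stmt_3_general a ha m n hm x y
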